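/- Failure of elimination of finite imaginaries (standard-model form): let p₁, p₂, q₁, q₂ be pairwise distinct primes and set a = p₁·p₂ and b = q₁·q₂ in ℕ⁺. Then for every finite set X ⊆ ℕ⁺ the following holds: if every monoid automorphism f of ℕ⁺ with f({a,b}) = {a,b} fixes X pointwise, then there exists a monoid automorphism g of ℕ⁺ fixing X pointwise with g({a,b}) ≠ {a,b}. Consequently the pair {a,b} has no canonical parameter. -/

import Mathlib

open FirstOrder Language

/-- The language `L` with one binary function symbol `·` and one constant symbol `1`. -/
def L : FirstOrder.Language :=
  ⟨fun n => match n with | 0 => Unit | 2 => Unit | _ => Empty, fun _ => Empty⟩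

/-- Any monoid is an `L`-structure, with `·` interpreted as multiplication and `1` as the
identity. In particular `ℕ+` is the standard model of Skolem arithmetic, and
`Multiplicative ℕ` is the additive `L`-structure `(ℕ, +, 0)`. -/
instance (M : Type*) [Monoid M] : L.Structure M where
  funMap {n} f x :=
    match n, f, x with
    | 0, _, _ => 1
    | 2, _, x => x 0 * x 1
  RelMap r _ := r.elim

/-!
A permutation of the primes induces an automorphism of `ℕ+`. Write `a = p₁p₂` and `b = q₁q₂`.
The automorphism induced by `(p₁ q₁)(p₂ q₂)` exchanges `a` and `b`, so it fixes `X` pointwise;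
hence the exponents of `p₁` and `q₁` agree in every `x ∈ X`. The automorphism induced by the
transposition `(p₁ q₁)` alone therefore also fixes `X` pointwise, but sends `a` to `q₁p₂ ∉ {a, b}`.
-/

theorem Multiset.map_swap_eq_self {α : Type*} [DecidableEq α] {a b : α} {m : Multiset α}
    (h : m.count a = m.count b) : m.map (Equiv.swap a b) = m := by
  ext r
  obtain ⟨s, rfl⟩ := (Equiv.swap a b).surjective r
  rw [count_map_eq_count' _ _ (Equiv.injective _), Equiv.swap_apply_def]
  split_ifs <;> simp_all

namespace PNat

def mapPrimes (f : Nat.Primes → Nat.Primes) (n : ℕ+) : ℕ+ :=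
  PrimeMultiset.prod (n.factorMultiset.map f)

theorem factorMultiset_mapPrimes (f : Nat.Primes → Nat.Primes) (n : ℕ+) :
    (mapPrimes f n).factorMultiset = n.factorMultiset.map f :=
  PrimeMultiset.factorMultiset_prod _

theorem mapPrimes_eq_self_iff {f : Nat.Primes → Nat.Primes} {n : ℕ+} :
    mapPrimes f n = n ↔ n.factorMultiset.map f = n.factorMultiset := by
  rw [← factorMultisetEquiv.injective.eq_iff]
  exact Eq.congr_left (factorMultiset_mapPrimes f n)

theorem mapPrimes_mapPrimes (f g : Nat.Primes → Nat.Primes) (n : ℕ+) :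
    mapPrimes f (mapPrimes g n) = mapPrimes (f ∘ g) n := by
  rw [mapPrimes, factorMultiset_mapPrimes]
  exact congrArg PrimeMultiset.prod (Multiset.map_map f g _)

theorem mapPrimes_id (n : ℕ+) : mapPrimes id n = n :=
  mapPrimes_eq_self_iff.2 (Multiset.map_id _)

@[simp]
theorem mapPrimes_mul (f : Nat.Primes → Nat.Primes) (m n : ℕ+) :
    mapPrimes f (m * n) = mapPrimes f m * mapPrimes f n := by
  rw [mapPrimes, factorMultiset_mul]
  exact (congrArg PrimeMultiset.prod (Multiset.map_add f _ _)).trans (PrimeMultiset.prod_add _ _)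

@[simp]
theorem mapPrimes_coe_prime (f : Nat.Primes → Nat.Primes) (p : Nat.Primes) :
    mapPrimes f p = f p := by
  rw [mapPrimes, factorMultiset_ofPrime]
  exact PrimeMultiset.prod_ofPrime (f p)

def mapPrimesMulEquiv (e : Equiv.Perm Nat.Primes) : ℕ+ ≃* ℕ+ where
  toFun := mapPrimes e
  invFun := mapPrimes e.symm
  left_inv n := by rw [mapPrimes_mapPrimes, e.symm_comp_self, mapPrimes_id]
  right_inv n := by rw [mapPrimes_mapPrimes, e.self_comp_symm, mapPrimes_id]
  map_mul' := mapPrimes_mul e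

@[simp]
theorem mapPrimesMulEquiv_apply (e : Equiv.Perm Nat.Primes) (n : ℕ+) :
    mapPrimesMulEquiv e n = mapPrimes e n :=
  rfl

theorem mapPrimes_swap_eq_self {e : Equiv.Perm Nat.Primes} {p : Nat.Primes} {n : ℕ+}
    (hn : mapPrimes e n = n) : mapPrimes (Equiv.swap p (e p)) n = n := by
  rw [mapPrimes_eq_self_iff] at hn ⊢
  exact Multiset.map_swap_eq_self
    ((Multiset.count_map_eq_count' e _ e.injective p).symm.trans (congrArg _ hn))

end PNat

/-- Failure of elimination of finite imaginaries: for pairwise distinct primes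
`p₁, p₂, q₁, q₂`, the pair `{p₁·p₂, q₁·q₂}` has no canonical parameter: any finite set
fixed pointwise by all automorphisms fixing the pair setwise is fixed pointwise by some
automorphism moving the pair. -/
theorem no_finite_canonical_parameter (p₁ p₂ q₁ q₂ : ℕ+)
    (hp₁ : (p₁ : ℕ).Prime) (hp₂ : (p₂ : ℕ).Prime)
    (hq₁ : (q₁ : ℕ).Prime) (hq₂ : (q₂ : ℕ).Prime)
    (hd : [p₁, p₂, q₁, q₂].Pairwise (· ≠ ·)) :
    ∀ X : Finset ℕ+,
      (∀ f : ℕ+ ≃* ℕ+,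
        ({f (p₁ * p₂), f (q₁ * q₂)} : Set ℕ+) = {p₁ * p₂, q₁ * q₂} → ∀ x ∈ X, f x = x) →
      ∃ g : ℕ+ ≃* ℕ+, (∀ x ∈ X, g x = x) ∧
        ({g (p₁ * p₂), g (q₁ * q₂)} : Set ℕ+) ≠ {p₁ * p₂, q₁ * q₂} := by
  intro X hX
  obtain ⟨P₁, rfl⟩ : ∃ P : Nat.Primes, (P : ℕ+) = p₁ := ⟨⟨p₁, hp₁⟩, rfl⟩
  obtain ⟨P₂, rfl⟩ : ∃ P : Nat.Primes, (P : ℕ+) = p₂ := ⟨⟨p₂, hp₂⟩, rfl⟩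
  obtain ⟨Q₁, rfl⟩ : ∃ Q : Nat.Primes, (Q : ℕ+) = q₁ := ⟨⟨q₁, hq₁⟩, rfl⟩
  obtain ⟨Q₂, rfl⟩ : ∃ Q : Nat.Primes, (Q : ℕ+) = q₂ := ⟨⟨q₂, hq₂⟩, rfl⟩
  simp only [ne_eq, List.pairwise_cons, List.mem_cons, List.not_mem_nil, or_false,
    forall_eq_or_imp, Nat.Primes.coe_pnat_inj, forall_eq, IsEmpty.forall_iff, implies_true,
    List.Pairwise.nil, and_self, and_true] at hd
  obtain ⟨⟨h12, h13, h14⟩, ⟨h23, h24⟩, h34⟩ := hd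
  set σ := Equiv.swap P₁ Q₁ * Equiv.swap P₂ Q₂
  have hσP₁ : σ P₁ = Q₁ := by simp [σ, Equiv.swap_apply_of_ne_of_ne, *]
  have hσa : PNat.mapPrimesMulEquiv σ (P₁ * P₂) = Q₁ * Q₂ := by
    simp [σ, Equiv.swap_apply_of_ne_of_ne, *, Ne.symm]
  have hσb : PNat.mapPrimesMulEquiv σ (Q₁ * Q₂) = P₁ * P₂ := by
    simp [σ, Equiv.swap_apply_of_ne_of_ne, *, Ne.symm]
  have hσX : ∀ x ∈ X, PNat.mapPrimes σ x = x := hX _ (by rw [hσa, hσb, Set.pair_comm])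
  refine ⟨PNat.mapPrimesMulEquiv (Equiv.swap P₁ Q₁), fun x hx => ?_, ?_⟩
  · simpa [hσP₁] using PNat.mapPrimes_swap_eq_self (p := P₁) (hσX x hx)
  · have hg : PNat.mapPrimesMulEquiv (Equiv.swap P₁ Q₁) (P₁ * P₂) = Q₁ * P₂ := by
      simp [Equiv.swap_apply_of_ne_of_ne, *, Ne.symm]
    intro h
    have hmem : (Q₁ * P₂ : ℕ+) ∈ ({(P₁ : ℕ+) * P₂, (Q₁ : ℕ+) * Q₂} : Set ℕ+) :=
      h ▸ hg ▸ Set.mem_insert _ _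
    simp [Nat.Primes.coe_pnat_inj, *, Ne.symm] at hmem
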